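/- Let u, v, w be three distinct nonzero real numbers and n ≥ 1. For any proper 3-coloring of the cycle-plus-triangles graph G on 3n vertices using colors u, v, w, the product Φ(x_1,...,x_{3n}) · ∏_{i=1}^{3n} φ(x_i) equals ±1, where Φ(x_1,...,x_{3n}) = ∏_{i=1}^{3n}(1 - x_{i+1}/x_i) ∏_{i=1}^n (1 - a_i/b_i)(1 - b_i/c_i)(1 - c_i/a_i), x_i is the color of vertex i, and φ(u) = vw/((u-v)(u-w)) etc. -/

import Mathlib

/-!
Squaring removes all signs. Write `p = (X - u)(X - v)(X - w)` and `D` for its discriminant. For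
distinct colours `a, b` one has `(a - b)² D = (p'(a) p'(b))²`, and `φ(z) = uvw / (z p'(z))`.
Both the Hamiltonian cycle and the union of the triangles are the edges `i → σ i` of a
permutation `σ` of the vertices, so each of the two edge products, squared, is a ratio of
vertex products of `x_i` and `p'(x_i)`. As every triangle is rainbow, each colour occurs exactly
`n` times, so every vertex product is an `n`-th power of a symmetric expression in `u, v, w`,
and everything cancels.
-/

namespace CyclePlusTriangles

open Finset

section Cubic

variable {K : Type*}

-- the derivative of `(X - u) * (X - v) * (X - w)` at `z`
def cubicDeriv [CommRing K] (u v w z : K) : K :=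
  (z - u) * (z - v) + (z - v) * (z - w) + (z - w) * (z - u)

def cubicDiscr [CommRing K] (u v w : K) : K :=
  ((u - v) * (u - w) * (v - w)) ^ 2

-- the weight `φ` of the statement
def phi [Field K] [DecidableEq K] (u v w z : K) : K :=
  if z = u then v * w / ((u - v) * (u - w))
  else if z = v then u * w / ((v - u) * (v - w))
  else u * v / ((w - u) * (w - v))

theorem cubicDeriv_mul_mul [CommRing K] (u v w : K) :
    cubicDeriv u v w u * cubicDeriv u v w v * cubicDeriv u v w w = -cubicDiscr u v w := by
  unfold cubicDeriv cubicDiscr; ring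

theorem cubicDiscr_ne_zero [CommRing K] [IsDomain K] {u v w : K}
    (huv : u ≠ v) (huw : u ≠ w) (hvw : v ≠ w) : cubicDiscr u v w ≠ 0 :=
  pow_ne_zero _ <| mul_ne_zero (mul_ne_zero (sub_ne_zero.2 huv) (sub_ne_zero.2 huw))
    (sub_ne_zero.2 hvw)

theorem sq_sub_mul_cubicDiscr [CommRing K] {u v w a b : K}
    (ha : a ∈ ({u, v, w} : Set K)) (hb : b ∈ ({u, v, w} : Set K)) (hab : a ≠ b) :
    (a - b) ^ 2 * cubicDiscr u v w = (cubicDeriv u v w a * cubicDeriv u v w b) ^ 2 := by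
  unfold cubicDeriv cubicDiscr
  rcases ha with rfl | rfl | rfl <;> rcases hb with rfl | rfl | rfl <;>
    first | exact absurd rfl hab | ring

theorem phi_mul_mul_cubicDeriv [Field K] [DecidableEq K] {u v w z : K}
    (huv : u ≠ v) (huw : u ≠ w) (hvw : v ≠ w) (hz : z ∈ ({u, v, w} : Set K)) :
    phi u v w z * (z * cubicDeriv u v w z) = u * v * w := by
  have := sub_ne_zero.2 huv
  have := sub_ne_zero.2 huw
  have := sub_ne_zero.2 hvw
  have := sub_ne_zero.2 huv.symm
  have := sub_ne_zero.2 huw.symm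
  have := sub_ne_zero.2 hvw.symm
  unfold phi cubicDeriv
  rcases hz with rfl | rfl | rfl
  · simp only [if_true]; field_simp; ring
  · simp only [if_neg huv.symm, if_true]; field_simp; ring
  · simp only [if_neg huw.symm, if_neg hvw.symm]; field_simp; ring

end Cubic

section Rainbow

variable {α ι : Type*} {n : ℕ}

def RainbowTriangles (t : Fin n × Fin 3 ≃ ι) (x : ι → α) : Prop :=
  ∀ i, x (t (i, 0)) ≠ x (t (i, 1)) ∧ x (t (i, 1)) ≠ x (t (i, 2)) ∧ x (t (i, 2)) ≠ x (t (i, 0))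

theorem mul_mul_eq_of_distinct {M : Type*} [CommMonoid M] (f : α → M) {u v w a b c : α}
    (ha : a ∈ ({u, v, w} : Set α)) (hb : b ∈ ({u, v, w} : Set α))
    (hc : c ∈ ({u, v, w} : Set α)) (hab : a ≠ b) (hbc : b ≠ c) (hca : c ≠ a) :
    f a * f b * f c = f u * f v * f w := by
  rcases ha with rfl | rfl | rfl <;> rcases hb with rfl | rfl | rfl <;>
    rcases hc with rfl | rfl | rfl <;>
    first | exact absurd rfl hab | exact absurd rfl hbc | exact absurd rfl hca | ac_rfl

theorem prod_eq_pow_of_rainbowTriangles [Fintype ι] {M : Type*} [CommMonoid M] (f : α → M)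
    {t : Fin n × Fin 3 ≃ ι} {u v w : α} {x : ι → α} (hx : ∀ i, x i ∈ ({u, v, w} : Set α))
    (htri : RainbowTriangles t x) :
    ∏ j, f (x j) = (f u * f v * f w) ^ n := by
  rw [← Equiv.prod_comp t, Fintype.prod_prod_type]
  simp only [Fin.prod_univ_three]
  rw [← Fin.prod_const]
  exact Fintype.prod_congr _ _ fun i =>
    mul_mul_eq_of_distinct f (hx _) (hx _) (hx _) (htri i).1 (htri i).2.1 (htri i).2.2

def triangleRotation (t : Fin n × Fin 3 ≃ ι) : Equiv.Perm ι :=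
  t.permCongr ((Equiv.refl (Fin n)).prodCongr (Equiv.subRight 1))

theorem triangleRotation_apply (t : Fin n × Fin 3 ≃ ι) (i : Fin n) (k : Fin 3) :
    triangleRotation t (t (i, k)) = t (i, k - 1) := by
  simp [triangleRotation, Equiv.permCongr_apply]

theorem prod_triangleRotation [Fintype ι] {M : Type*} [CommMonoid M] (t : Fin n × Fin 3 ≃ ι)
    (g : ι → ι → M) :
    ∏ j, g j (triangleRotation t j) =
      ∏ i, g (t (i, 1)) (t (i, 0)) * g (t (i, 2)) (t (i, 1)) * g (t (i, 0)) (t (i, 2)) := by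
  rw [← Equiv.prod_comp t, Fintype.prod_prod_type]
  refine Fintype.prod_congr _ _ fun i => ?_
  rw [Fin.prod_univ_three, triangleRotation_apply, triangleRotation_apply, triangleRotation_apply,
    mul_rotate]
  rfl

theorem apply_ne_apply_triangleRotation {t : Fin n × Fin 3 ≃ ι} {x : ι → α}
    (htri : RainbowTriangles t x) (j : ι) : x j ≠ x (triangleRotation t j) := by
  obtain ⟨⟨i, k⟩, rfl⟩ := t.surjective j
  rw [triangleRotation_apply]
  fin_cases k
  exacts [(htri i).2.2.symm, (htri i).1.symm, (htri i).2.1.symm]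

end Rainbow

theorem sq_prod_one_sub_div_mul {K ι : Type*} [Field K] [Fintype ι] (σ : Equiv.Perm ι)
    {u v w : K} {x : ι → K} (hx : ∀ i, x i ∈ ({u, v, w} : Set K)) (hx0 : ∀ i, x i ≠ 0)
    (hσ : ∀ i, x i ≠ x (σ i)) :
    (∏ i, (1 - x (σ i) / x i)) ^ 2 * (∏ i, x i) ^ 2 * cubicDiscr u v w ^ Fintype.card ι =
      (∏ i, cubicDeriv u v w (x i)) ^ 4 := by
  have hedge : ∀ i, (1 - x (σ i) / x i) * x i = x i - x (σ i) := fun i => by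
    field_simp [hx0 i]
  calc _ = (∏ i, (x i - x (σ i))) ^ 2 * cubicDiscr u v w ^ Fintype.card ι := by
        rw [← mul_pow, ← prod_mul_distrib]
        simp only [hedge]
    _ = ∏ i, ((x i - x (σ i)) ^ 2 * cubicDiscr u v w) := by
        rw [prod_mul_distrib, prod_pow, prod_const, card_univ]
    _ = ∏ i, (cubicDeriv u v w (x i) * cubicDeriv u v w (x (σ i))) ^ 2 :=
        prod_congr rfl fun i _ => sq_sub_mul_cubicDiscr (hx i) (hx (σ i)) (hσ i)
    _ = _ := by
        rw [prod_pow, prod_mul_distrib, Equiv.prod_comp σ (fun j => cubicDeriv u v w (x j))]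
        ring

section RainbowColoring

variable {K ι : Type*} [Field K] [Fintype ι] {n : ℕ}

theorem card_eq_of_equiv_triangles (t : Fin n × Fin 3 ≃ ι) : Fintype.card ι = 3 * n := by
  rw [← Fintype.card_congr t, Fintype.card_prod, Fintype.card_fin, Fintype.card_fin, mul_comm]

theorem prod_cubicDeriv_sq_of_rainbowTriangles {t : Fin n × Fin 3 ≃ ι} {u v w : K} {x : ι → K}
    (hx : ∀ i, x i ∈ ({u, v, w} : Set K)) (htri : RainbowTriangles t x) :
    (∏ j, cubicDeriv u v w (x j)) ^ 2 = cubicDiscr u v w ^ (2 * n) := by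
  rw [← prod_pow, prod_eq_pow_of_rainbowTriangles (cubicDeriv u v w · ^ 2) hx htri, ← mul_pow,
    ← mul_pow, cubicDeriv_mul_mul, neg_sq, pow_mul]

theorem sq_prod_one_sub_div_mul_pow_of_rainbowTriangles (σ : Equiv.Perm ι)
    {t : Fin n × Fin 3 ≃ ι} {u v w : K} {x : ι → K} (huv : u ≠ v) (huw : u ≠ w) (hvw : v ≠ w)
    (hx : ∀ i, x i ∈ ({u, v, w} : Set K)) (hx0 : ∀ i, x i ≠ 0) (htri : RainbowTriangles t x)
    (hσ : ∀ i, x i ≠ x (σ i)) :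
    (∏ i, (1 - x (σ i) / x i)) ^ 2 * (u * v * w) ^ (2 * n) = cubicDiscr u v w ^ n := by
  have h := sq_prod_one_sub_div_mul σ hx hx0 hσ
  rw [prod_eq_pow_of_rainbowTriangles (fun z => z) hx htri, card_eq_of_equiv_triangles t] at h
  have hP := prod_cubicDeriv_sq_of_rainbowTriangles hx htri
  refine mul_right_cancel₀ (pow_ne_zero (3 * n) (cubicDiscr_ne_zero huv huw hvw)) ?_
  linear_combination h + ((∏ i, cubicDeriv u v w (x i)) ^ 2 + cubicDiscr u v w ^ (2 * n)) * hP

theorem sq_prod_phi_mul_pow_of_rainbowTriangles [DecidableEq K] {t : Fin n × Fin 3 ≃ ι}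
    {u v w : K} {x : ι → K} (hu : u ≠ 0) (hv : v ≠ 0) (hw : w ≠ 0)
    (huv : u ≠ v) (huw : u ≠ w) (hvw : v ≠ w)
    (hx : ∀ i, x i ∈ ({u, v, w} : Set K)) (htri : RainbowTriangles t x) :
    (∏ i, phi u v w (x i)) ^ 2 * cubicDiscr u v w ^ (2 * n) = (u * v * w) ^ (4 * n) := by
  have h : (∏ i, phi u v w (x i)) * ((∏ i, x i) * ∏ i, cubicDeriv u v w (x i)) =
      (u * v * w) ^ (3 * n) := by
    simp only [← prod_mul_distrib, phi_mul_mul_cubicDeriv huv huw hvw (hx _), prod_const,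
      card_univ, card_eq_of_equiv_triangles t]
  apply_fun (· ^ 2) at h
  rw [mul_pow, mul_pow, prod_eq_pow_of_rainbowTriangles (fun z => z) hx htri,
    prod_cubicDeriv_sq_of_rainbowTriangles hx htri] at h
  refine mul_right_cancel₀ (pow_ne_zero (2 * n) (mul_ne_zero (mul_ne_zero hu hv) hw)) ?_
  linear_combination h

end RainbowColoring

end CyclePlusTriangles

open CyclePlusTriangles in
/-- for any proper 3-coloring of the cycle-plus-triangles graph
with three distinct nonzero real colors `u, v, w`, the product
`Φ(x_1,…,x_{3n}) · ∏ φ(x_i)` equals `±1`, where `x_i` is the color of vertex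
`i`, `Φ = ∏ (1 - x_{i+1}/x_i) ∏ (1 - a_i/b_i)(1 - b_i/c_i)(1 - c_i/a_i)` and
`φ(u) = vw/((u-v)(u-w))` etc. -/
theorem stmt_18 (n : ℕ) (hn : 1 ≤ n) (t : Fin n × Fin 3 ≃ Fin (3 * n))
    (u v w : ℝ) (hu : u ≠ 0) (hv : v ≠ 0) (hw : w ≠ 0)
    (huv : u ≠ v) (huw : u ≠ w) (hvw : v ≠ w) :
    haveI : NeZero (3 * n) := ⟨by omega⟩
    ∀ x : Fin (3 * n) → ℝ, (∀ i, x i ∈ ({u, v, w} : Set ℝ)) →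
      (∀ i : Fin (3 * n), x i ≠ x (i + 1)) →
      (∀ i : Fin n, x (t (i, 0)) ≠ x (t (i, 1)) ∧ x (t (i, 1)) ≠ x (t (i, 2)) ∧
        x (t (i, 2)) ≠ x (t (i, 0))) →
      let φ : ℝ → ℝ := fun z =>
        if z = u then v * w / ((u - v) * (u - w))
        else if z = v then u * w / ((v - u) * (v - w))
        else u * v / ((w - u) * (w - v))
      let Φ : ℝ :=
        (∏ i : Fin (3 * n), (1 - x (i + 1) / x i)) *
          ∏ i : Fin n,
            ((1 - x (t (i, 0)) / x (t (i, 1))) * (1 - x (t (i, 1)) / x (t (i, 2))) *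
              (1 - x (t (i, 2)) / x (t (i, 0))))
      Φ * ∏ i : Fin (3 * n), φ (x i) = 1 ∨ Φ * ∏ i : Fin (3 * n), φ (x i) = -1 := by
  have : NeZero (3 * n) := ⟨by omega⟩
  intro x hx hcyc htri φ Φ
  have hx0 : ∀ i, x i ≠ 0 := fun i => by
    rcases hx i with h | h | h <;> rw [h] <;> assumption
  have hcycle := sq_prod_one_sub_div_mul_pow_of_rainbowTriangles (Equiv.addRight 1)
    huv huw hvw hx hx0 htri hcyc
  have htriangles := sq_prod_one_sub_div_mul_pow_of_rainbowTriangles (triangleRotation t)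
    huv huw hvw hx hx0 htri (apply_ne_apply_triangleRotation htri)
  rw [prod_triangleRotation t fun j k => 1 - x k / x j] at htriangles
  simp only [Equiv.coe_addRight] at hcycle
  have hphi : (∏ i, φ (x i)) ^ 2 * cubicDiscr u v w ^ (2 * n) = (u * v * w) ^ (4 * n) :=
    sq_prod_phi_mul_pow_of_rainbowTriangles hu hv hw huv huw hvw hx htri
  rw [← mul_self_eq_one_iff, ← sq]
  refine mul_right_cancel₀ (mul_ne_zero (pow_ne_zero (4 * n) (mul_ne_zero (mul_ne_zero hu hv) hw))
    (pow_ne_zero (2 * n) (cubicDiscr_ne_zero huv huw hvw))) ?_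
  linear_combination congr($hcycle * $htriangles * $hphi)
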